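/- Let A be a nonnegative real n×m matrix with n ≤ m. Then rank_θ(A) < n if and only if every n×n submatrix A_I of A (columns indexed by an n-element subset I of {1,…,m}) satisfies rank_θ(A_I) < n. -/

import Mathlib

open Matrix
open Finset

noncomputable def phaselessRank {n m : ℕ} (A : Matrix (Fin n) (Fin m) ℝ) : ℕ :=
  sInf {r | ∃ B : Matrix (Fin n) (Fin m) ℂ,
    (∀ i j, ‖B i j‖ = A i j) ∧ B.rank = r}

lemma sq_eq_imp_eq {x y : ℝ} (hx : 0 ≤ x) (hy : 0 ≤ y) (h : x^2 = y^2) : x = y := by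
  nlinarith [sq_nonneg (x - y), sq_nonneg (x + y)]

lemma signs_lemma {ι : Type*} [DecidableEq ι] (a : ι → ℝ) (M : ℝ) (hM0 : 0 ≤ M) (s : Finset ι)
    (h0 : ∀ i ∈ s, 0 ≤ a i) (hM : ∀ i ∈ s, a i ≤ M) :
    ∃ ε : ι → ℝ, (∀ i ∈ s, ε i = 1 ∨ ε i = -1) ∧ |∑ i ∈ s, ε i * a i| ≤ M := by
  induction s using Finset.induction_on with
  | empty => exact ⟨fun _ => 1, by simp, by simpa using hM0⟩
  | @insert j s hj ih =>
    obtain ⟨ε, hε, ht⟩ := ih (fun i hi => h0 i (mem_insert_of_mem hi))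
      (fun i hi => hM i (mem_insert_of_mem hi))
    set t := ∑ i ∈ s, ε i * a i with hts
    set σ : ℝ := if 0 ≤ t then -1 else 1 with hσ
    refine ⟨Function.update ε j σ, ?_, ?_⟩
    · intro i hi
      rcases eq_or_ne i j with rfl | hij
      · rw [Function.update_self]
        rcases le_or_gt 0 t with h | h
        · right; simp [hσ, h]
        · left; simp [hσ, not_le.mpr h]
      · rw [Function.update_of_ne hij]
        exact hε i ((mem_insert.mp hi).resolve_left hij)
    · rw [Finset.sum_insert hj, Function.update_self]
      have hsum : ∑ i ∈ s, Function.update ε j σ i * a i = t := by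
        apply Finset.sum_congr rfl
        intro i hi
        exact if hij : i = j then absurd (hij ▸ hi) hj else by rw [Function.update_of_ne hij]
      rw [hsum]
      have haj0 := h0 j (mem_insert_self j s)
      have hajM := hM j (mem_insert_self j s)
      have ht' := abs_le.mp ht
      rcases le_or_gt 0 t with h | h
      · simp only [hσ, if_pos h]
        rw [abs_le]; constructor <;> nlinarith
      · simp only [hσ, if_neg (not_le.mpr h)]
        rw [abs_le]; constructor <;> nlinarith

lemma triangle_lemma (u v w : ℝ) (hu : 0 ≤ u) (hv : 0 ≤ v) (hw : 0 ≤ w)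
    (h1 : u ≤ v + w) (h2 : v ≤ u + w) (h3 : w ≤ u + v) :
    ∃ p q r : ℂ, ‖p‖ = u ∧ ‖q‖ = v ∧ ‖r‖ = w ∧ p + q + r = 0 := by
  rcases eq_or_lt_of_le hu with h | hu'
  · have hwv : w = v := le_antisymm (by linarith) (by linarith)
    refine ⟨0, (v : ℂ), -(v : ℂ), by simp [← h], ?_, ?_, by ring⟩
    · simp [Complex.norm_real, Real.norm_eq_abs, abs_of_nonneg hv]
    · simp [hwv, Complex.norm_real, Real.norm_eq_abs, abs_of_nonneg hv]
  rcases eq_or_lt_of_le hv with h | hv'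
  · have hwu : w = u := le_antisymm (by linarith) (by linarith)
    refine ⟨(u : ℂ), 0, -(u : ℂ), ?_, by simp [← h], ?_, by ring⟩
    · simp [Complex.norm_real, Real.norm_eq_abs, abs_of_nonneg hu]
    · simp [hwu, Complex.norm_real, Real.norm_eq_abs, abs_of_nonneg hu]
  · set c : ℝ := (u^2 + v^2 - w^2)/(2*u*v) with hc
    have huv : (0:ℝ) < 2*u*v := by positivity
    have hc2 : c^2 ≤ 1 := by
      rw [hc, div_pow, div_le_one (by positivity)]
      nlinarith [mul_nonneg (mul_nonneg (mul_nonneg (by linarith : (0:ℝ) ≤ w - u + v)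
        (by linarith : (0:ℝ) ≤ w + u - v)) (by linarith : (0:ℝ) ≤ u + v - w))
        (by linarith : (0:ℝ) ≤ u + v + w)]
    set s : ℝ := Real.sqrt (1 - c^2) with hs0
    have hs : s^2 = 1 - c^2 := Real.sq_sqrt (by linarith)
    have hcval : c * (2*u*v) = u^2 + v^2 - w^2 := div_mul_cancel₀ _ (ne_of_gt huv)
    refine ⟨(u : ℂ), ⟨-(v*c), v*s⟩, ⟨v*c - u, -(v*s)⟩, ?_, ?_, ?_, ?_⟩
    · simp [Complex.norm_real, Real.norm_eq_abs, abs_of_nonneg hu]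
    · apply sq_eq_imp_eq (norm_nonneg _) hv
      rw [Complex.sq_norm, Complex.normSq_mk]; nlinarith [hs]
    · apply sq_eq_imp_eq (norm_nonneg _) hw
      rw [Complex.sq_norm, Complex.normSq_mk]; nlinarith [hs]
    · apply Complex.ext <;> simp [Complex.add_re, Complex.add_im] <;> ring

lemma polygon_nec {ι : Type*} [Fintype ι] [DecidableEq ι] (z : ι → ℂ) (hz : ∑ i, z i = 0)
    (i : ι) : 2 * ‖z i‖ ≤ ∑ k, ‖z k‖ := by
  have h1 : z i + ∑ k ∈ univ.erase i, z k = 0 := by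
    rw [Finset.add_sum_erase univ z (mem_univ i), hz]
  have h2 : ‖z i‖ ≤ ∑ k ∈ univ.erase i, ‖z k‖ := by
    have : z i = -∑ k ∈ univ.erase i, z k := by linear_combination h1
    rw [this, norm_neg]
    exact norm_sum_le _ _
  have h3 : ∑ k, ‖z k‖ =
      ‖z i‖ + ∑ k ∈ univ.erase i, ‖z k‖ :=
    (Finset.add_sum_erase univ _ (mem_univ i)).symm
  linarith

lemma polygon_exists {ι : Type*} [Fintype ι] [DecidableEq ι] (a : ι → ℝ) (h0 : ∀ i, 0 ≤ a i)
    (h : ∀ i, 2 * a i ≤ ∑ k, a k) :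
    ∃ z : ι → ℂ, (∀ i, ‖z i‖ = a i) ∧ ∑ i, z i = 0 := by
  rcases isEmpty_or_nonempty ι with hι | hι
  · exact ⟨0, fun i => (IsEmpty.false i).elim, by simp⟩
  obtain ⟨i₀, -, hi₀⟩ := Finset.exists_max_image (univ : Finset ι) a univ_nonempty
  set M := a i₀ with hM
  set s := univ.erase i₀ with hsdef
  obtain ⟨ε, hε, ht⟩ := signs_lemma a M (h0 i₀) s (fun i _ => h0 i) (fun i _ => hi₀ i (mem_univ i))
  set B := s.filter (fun i => ε i = 1) with hB
  set C := s.filter (fun i => ¬ (ε i = 1)) with hC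
  set v := ∑ i ∈ B, a i with hv
  set w := ∑ i ∈ C, a i with hw
  have hv0 : 0 ≤ v := Finset.sum_nonneg (fun i _ => h0 i)
  have hw0 : 0 ≤ w := Finset.sum_nonneg (fun i _ => h0 i)
  have htvw : ∑ i ∈ s, ε i * a i = v - w := by
    rw [← Finset.sum_filter_add_sum_filter_not s (fun i => ε i = 1), ← hB, ← hC]
    have e1 : ∑ i ∈ B, ε i * a i = v := by
      apply Finset.sum_congr rfl; intro i hi
      rw [(Finset.mem_filter.mp hi).2, one_mul]
    have e2 : ∑ i ∈ C, ε i * a i = -w := by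
      rw [hw, ← Finset.sum_neg_distrib]
      apply Finset.sum_congr rfl; intro i hi
      obtain ⟨his, hine⟩ := Finset.mem_filter.mp hi
      rcases hε i his with h1 | h1
      · exact absurd h1 hine
      · rw [h1]; ring
    rw [e1, e2]; ring
  have hvw : M + (v + w) = ∑ k, a k := by
    rw [hv, hw, ← Finset.sum_filter_add_sum_filter_not s (fun i => ε i = 1), ← hB, ← hC] at *
    rw [← Finset.add_sum_erase univ a (mem_univ i₀)]
    ring_nf
    rw [← hsdef]
    rw [← Finset.sum_filter_add_sum_filter_not s (fun i => ε i = 1), ← hB, ← hC]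
    ring
  have habs := abs_le.mp ht
  rw [htvw] at habs
  obtain ⟨p, q, r, hp, hq, hr, hpqr⟩ := triangle_lemma M v w (h0 i₀) hv0 hw0
    (by have := h i₀; rw [← hvw] at this; linarith)
    (by linarith [habs.2]) (by linarith [habs.1])
  classical
  set z : ι → ℂ := fun i => if i = i₀ then p else if ε i = 1 then
      (if v = 0 then 0 else ((a i / v : ℝ) : ℂ) * q)
    else (if w = 0 then 0 else ((a i / w : ℝ) : ℂ) * r) with hz
  have hmemB : ∀ i, i ≠ i₀ → ε i = 1 → i ∈ B := fun i h1 h2 =>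
    Finset.mem_filter.mpr ⟨Finset.mem_erase.mpr ⟨h1, mem_univ i⟩, h2⟩
  have hmemC : ∀ i, i ≠ i₀ → ε i ≠ 1 → i ∈ C := fun i h1 h2 =>
    Finset.mem_filter.mpr ⟨Finset.mem_erase.mpr ⟨h1, mem_univ i⟩, h2⟩
  refine ⟨z, ?_, ?_⟩
  · intro i
    rcases eq_or_ne i i₀ with rfl | hii₀
    · simp only [hz, if_pos rfl]; exact hp
    rcases eq_or_ne (ε i) 1 with hεi | hεi
    · simp only [hz, if_neg hii₀, if_pos hεi]
      rcases eq_or_ne v 0 with hv' | hv'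
      · have hai : a i = 0 := (Finset.sum_eq_zero_iff_of_nonneg (fun k _ => h0 k)).mp
          (by rw [← hv]; exact hv') i (hmemB i hii₀ hεi)
        rw [if_pos hv']
        simp [hai]
      · rw [if_neg hv', norm_mul, Complex.norm_real, Real.norm_eq_abs, hq,
          abs_of_nonneg (div_nonneg (h0 i) hv0), div_mul_cancel₀ _ hv']
    · simp only [hz, if_neg hii₀, if_neg hεi]
      rcases eq_or_ne w 0 with hw' | hw'
      · have hai : a i = 0 := (Finset.sum_eq_zero_iff_of_nonneg (fun k _ => h0 k)).mp
          (by rw [← hw]; exact hw') i (hmemC i hii₀ hεi)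
        rw [if_pos hw']
        simp [hai]
      · rw [if_neg hw', norm_mul, Complex.norm_real, Real.norm_eq_abs, hr,
          abs_of_nonneg (div_nonneg (h0 i) hw0), div_mul_cancel₀ _ hw']
  · rw [← Finset.add_sum_erase univ z (mem_univ i₀), ← hsdef]
    have hzi₀ : z i₀ = p := by simp [hz]
    have hsplit : ∑ i ∈ s, z i = (∑ i ∈ B, z i) + ∑ i ∈ C, z i := by
      rw [← Finset.sum_filter_add_sum_filter_not s (fun i => ε i = 1), ← hB, ← hC]
    have hBsum : ∑ i ∈ B, z i = q := by
      rcases eq_or_ne v 0 with hv' | hv'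
      · have hq0 : q = 0 := by
          rw [← norm_eq_zero]; rw [hq, hv']
        rw [hq0]
        apply Finset.sum_eq_zero
        intro i hi
        obtain ⟨his, hεi⟩ := Finset.mem_filter.mp hi
        simp [hz, (Finset.mem_erase.mp his).1, hεi, hv']
      · have : ∑ i ∈ B, z i = ∑ i ∈ B, ((a i / v : ℝ) : ℂ) * q := by
          apply Finset.sum_congr rfl
          intro i hi
          obtain ⟨his, hεi⟩ := Finset.mem_filter.mp hi
          simp [hz, (Finset.mem_erase.mp his).1, hεi, hv']
        rw [this, ← Finset.sum_mul]
        have : ∑ i ∈ B, ((a i / v : ℝ) : ℂ) = ((v / v : ℝ) : ℂ) := by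
          push_cast
          rw [← Finset.sum_div, ← Complex.ofReal_sum, ← hv]
        rw [this, div_self hv', Complex.ofReal_one, one_mul]
    have hCsum : ∑ i ∈ C, z i = r := by
      rcases eq_or_ne w 0 with hw' | hw'
      · have hr0 : r = 0 := by rw [← norm_eq_zero]; rw [hr, hw']
        rw [hr0]
        apply Finset.sum_eq_zero
        intro i hi
        obtain ⟨his, hεi⟩ := Finset.mem_filter.mp hi
        simp [hz, (Finset.mem_erase.mp his).1, hεi, hw']
      · have : ∑ i ∈ C, z i = ∑ i ∈ C, ((a i / w : ℝ) : ℂ) * r := by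
          apply Finset.sum_congr rfl
          intro i hi
          obtain ⟨his, hεi⟩ := Finset.mem_filter.mp hi
          simp [hz, (Finset.mem_erase.mp his).1, hεi, hw']
        rw [this, ← Finset.sum_mul]
        have : ∑ i ∈ C, ((a i / w : ℝ) : ℂ) = ((w / w : ℝ) : ℂ) := by
          push_cast
          rw [← Finset.sum_div, ← Complex.ofReal_sum, ← hw]
        rw [this, div_self hw', Complex.ofReal_one, one_mul]
    rw [hzi₀, hsplit, hBsum, hCsum]
    linear_combination hpqr

lemma rank_lt_iff {n m : ℕ} (B : Matrix (Fin n) (Fin m) ℂ) :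
    B.rank < n ↔ ∃ g : Fin n → ℂ, g ≠ 0 ∧ ∀ j, ∑ i, g i * B i j = 0 := by
  have hrank : B.rank = (Set.range B).finrank ℂ := by
    rw [Matrix.rank_eq_finrank_span_row]; rfl
  have hle : (Set.range B).finrank ℂ ≤ n := by
    simpa using finrank_range_le_card B
  have hli : ¬ LinearIndependent ℂ B ↔ ∃ g : Fin n → ℂ, g ≠ 0 ∧ ∀ j, ∑ i, g i * B i j = 0 := by
    rw [Fintype.not_linearIndependent_iff (v := B)]
    constructor
    · rintro ⟨g, hg0, i, hgi⟩
      refine ⟨g, fun hgz => hgi (by rw [hgz]; rfl), fun j => ?_⟩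
      have := congrFun hg0 j
      simpa [Finset.sum_apply] using this
    · rintro ⟨g, hg, hgz⟩
      refine ⟨g, ?_, ?_⟩
      · funext j
        simpa [Finset.sum_apply] using hgz j
      · by_contra hc
        push_neg at hc
        exact hg (funext hc)
  rw [← hli, linearIndependent_iff_card_eq_finrank_span (b := B), Fintype.card_fin, hrank]
  omega

lemma phaseless_char {n m : ℕ} (A : Matrix (Fin n) (Fin m) ℝ) (hA : ∀ i j, 0 ≤ A i j) :
    phaselessRank A < n ↔ ∃ μ : Fin n → ℝ, (∀ i, 0 ≤ μ i) ∧ μ ≠ 0 ∧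
      ∀ j i, 2 * (μ i * A i j) ≤ ∑ k, μ k * A k j := by
  constructor
  · intro hlt
    have hne : {r | ∃ B : Matrix (Fin n) (Fin m) ℂ,
        (∀ i j, ‖B i j‖ = A i j) ∧ B.rank = r}.Nonempty := by
      refine ⟨_, (fun i j => (A i j : ℂ)), fun i j => ?_, rfl⟩
      rw [Complex.norm_real, Real.norm_eq_abs, abs_of_nonneg (hA i j)]
    obtain ⟨B, hB, hBr⟩ := Nat.sInf_mem hne
    rw [phaselessRank, ← hBr] at hlt
    obtain ⟨g, hg, hgz⟩ := (rank_lt_iff B).mp hlt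
    refine ⟨fun i => ‖g i‖, fun i => norm_nonneg _, ?_, ?_⟩
    · intro hz
      apply hg
      funext i
      have := congrFun hz i
      simpa using this
    · intro j i
      have := polygon_nec (fun i => g i * B i j) (hgz j) i
      simpa [norm_mul, hB] using this
  · rintro ⟨μ, hμ0, hμne, hcond⟩
    have hex : ∀ j : Fin m, ∃ z : Fin n → ℂ,
        (∀ i, ‖z i‖ = μ i * A i j) ∧ ∑ i, z i = 0 := by
      intro j
      exact polygon_exists (fun i => μ i * A i j)
        (fun i => mul_nonneg (hμ0 i) (hA i j)) (fun i => hcond j i)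
    choose z hz1 hz2 using hex
    set B : Matrix (Fin n) (Fin m) ℂ :=
      fun i j => if μ i = 0 then (A i j : ℂ) else z j i / (μ i : ℂ) with hBdef
    have habs : ∀ i j, ‖B i j‖ = A i j := by
      intro i j
      rcases eq_or_ne (μ i) 0 with h | h
      · simp only [hBdef, if_pos h]
        rw [Complex.norm_real, Real.norm_eq_abs, abs_of_nonneg (hA i j)]
      · simp only [hBdef, if_neg h]
        rw [norm_div, hz1 j i, Complex.norm_real, Real.norm_eq_abs, abs_of_nonneg (hμ0 i)]
        rw [mul_comm, mul_div_assoc, div_self h, mul_one]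
    have hrank : B.rank < n := by
      rw [rank_lt_iff]
      refine ⟨fun i => (μ i : ℂ), ?_, ?_⟩
      · intro hz
        apply hμne
        funext i
        have := congrFun hz i
        simpa using this
      · intro j
        rw [← hz2 j]
        apply Finset.sum_congr rfl
        intro i _
        rcases eq_or_ne (μ i) 0 with h | h
        · have hz0 : z j i = 0 := norm_eq_zero.mp (by rw [hz1 j i, h, zero_mul])
          rw [hz0]
          simp [h]
        · simp only [hBdef, if_neg h]
          rw [mul_div_cancel₀]
          exact_mod_cast h
    calc phaselessRank A ≤ B.rank := Nat.sInf_le ⟨B, habs, rfl⟩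
    _ < n := hrank

theorem stmt_14 {n m : ℕ} (hnm : n ≤ m) (A : Matrix (Fin n) (Fin m) ℝ)
    (hA : ∀ i j, 0 ≤ A i j) :
    phaselessRank A < n ↔
    ∀ f : Fin n → Fin m, Function.Injective f →
      phaselessRank (A.submatrix id f) < n := by
  rcases Nat.eq_zero_or_pos n with hn | hn
  · subst hn
    constructor
    · intro h
      exact absurd h (Nat.not_lt_zero _)
    · intro h
      exact absurd (h (fun i => i.elim0) (fun a => a.elim0)) (Nat.not_lt_zero _)
  constructor
  · intro hlt f hfinj
    obtain ⟨μ, h0, hne, hc⟩ := (phaseless_char A hA).mp hlt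
    exact (phaseless_char (A.submatrix id f) (fun i j => hA i (f j))).mpr
      ⟨μ, h0, hne, fun j i => hc (f j) i⟩
  · intro hsubs
    obtain ⟨d, rfl⟩ : ∃ d, n = d + 1 := ⟨n - 1, by omega⟩
    set emb : (Fin d → ℝ) → (Fin (d+1) → ℝ) := fun x => Fin.cons (1 - ∑ i, x i) x with hemb
    have hembsum : ∀ x : Fin d → ℝ, ∑ i, emb x i = 1 := by
      intro x
      rw [hemb]
      simp only [Fin.sum_cons]
      ring
    set F : Fin m → Set (Fin d → ℝ) := fun j =>
      {x | (∀ i, 0 ≤ emb x i) ∧ ∀ i, 2 * (emb x i * A i j) ≤ ∑ k, emb x k * A k j} with hF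
    have hconv : ∀ j, Convex ℝ (F j) := by
      intro j x hx y hy a b ha hb hab
      have hxy : ∀ i, emb (a • x + b • y) i = a * emb x i + b * emb y i := by
        intro i
        induction i using Fin.cases with
        | zero =>
          show (1 - ∑ k, (a • x + b • y) k) = a * (1 - ∑ k, x k) + b * (1 - ∑ k, y k)
          have hs : ∑ k, (a • x + b • y) k = a * ∑ k, x k + b * ∑ k, y k := by
            rw [Finset.mul_sum, Finset.mul_sum, ← Finset.sum_add_distrib]
            apply Finset.sum_congr rfl
            intro k _
            simp [smul_eq_mul]
          rw [hs]
          linear_combination (-1 : ℝ) * hab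
        | succ i =>
          show (a • x + b • y) i = a * x i + b * y i
          simp [smul_eq_mul]
      constructor
      · intro i
        rw [hxy i]
        exact add_nonneg (mul_nonneg ha (hx.1 i)) (mul_nonneg hb (hy.1 i))
      · intro i
        have hsum : ∑ k, emb (a • x + b • y) k * A k j
            = a * (∑ k, emb x k * A k j) + b * (∑ k, emb y k * A k j) := by
          rw [Finset.mul_sum, Finset.mul_sum, ← Finset.sum_add_distrib]
          apply Finset.sum_congr rfl
          intro k _
          rw [hxy k]
          ring
        rw [hxy i, hsum]
        have h1 := mul_le_mul_of_nonneg_left (hx.2 i) ha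
        have h2 := mul_le_mul_of_nonneg_left (hy.2 i) hb
        nlinarith
    -- building a point of F j from a weight vector μ
    have build : ∀ μ : Fin (d+1) → ℝ, (∀ i, 0 ≤ μ i) → μ ≠ 0 →
        ∃ x : Fin d → ℝ, ∀ j : Fin m,
          (∀ i, 2 * (μ i * A i j) ≤ ∑ k, μ k * A k j) → x ∈ F j := by
      intro μ hμ0 hμne
      set S := ∑ i, μ i with hS
      have hSpos : 0 < S := by
        obtain ⟨i, hi⟩ : ∃ i, μ i ≠ 0 := by
          by_contra hc
          push_neg at hc
          exact hμne (funext hc)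
        exact Finset.sum_pos' (fun k _ => hμ0 k)
          ⟨i, mem_univ i, lt_of_le_of_ne (hμ0 i) (Ne.symm hi)⟩
      set x : Fin d → ℝ := fun i => S⁻¹ * μ i.succ with hx
      have hembx : ∀ i, emb x i = S⁻¹ * μ i := by
        intro i
        induction i using Fin.cases with
        | zero =>
          show (1 - ∑ k, x k) = S⁻¹ * μ 0
          have hT : S = μ 0 + ∑ k : Fin d, μ k.succ := Fin.sum_univ_succ μ
          have hxsum : ∑ k, x k = S⁻¹ * ∑ k : Fin d, μ k.succ := by
            rw [hx, Finset.mul_sum]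
          have hS1 : S⁻¹ * S = 1 := inv_mul_cancel₀ (ne_of_gt hSpos)
          rw [hxsum]
          linear_combination (-1 : ℝ) * hS1 + S⁻¹ * hT
        | succ i =>
          rfl
      refine ⟨x, fun j hcond => ?_⟩
      constructor
      · intro i
        rw [hembx i]
        exact mul_nonneg (inv_nonneg.mpr (le_of_lt hSpos)) (hμ0 i)
      · intro i
        have hsum : ∑ k, emb x k * A k j = S⁻¹ * ∑ k, μ k * A k j := by
          rw [Finset.mul_sum]
          apply Finset.sum_congr rfl
          intro k _
          rw [hembx k]
          ring
        rw [hembx i, hsum]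
        have := mul_le_mul_of_nonneg_left (hcond i) (inv_nonneg.mpr (le_of_lt hSpos))
        linarith
    rw [phaseless_char A hA]
    have hinter : (⋂ j ∈ (univ : Finset (Fin m)), F j).Nonempty := by
      apply Convex.helly_theorem' (fun j _ => hconv j)
      intro I hIss hIcard
      have hfr : Module.finrank ℝ (Fin d → ℝ) = d := by simp
      rw [hfr] at hIcard
      obtain ⟨J, hIJ, hJss, hJcard⟩ := Finset.exists_subsuperset_card_eq hIss hIcard
        (by simpa using hnm)
      set f : Fin (d+1) → Fin m := fun i => (J.orderIsoOfFin hJcard i : Fin m) with hf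
      have hfinj : Function.Injective f := by
        intro a b hab
        exact (J.orderIsoOfFin hJcard).injective (Subtype.ext hab)
      have hsub := hsubs f hfinj
      obtain ⟨μ, hμ0, hμne, hcond⟩ :=
        (phaseless_char (A.submatrix id f) (fun i j => hA i (f j))).mp hsub
      obtain ⟨x, hxmem⟩ := build μ hμ0 hμne
      refine ⟨x, ?_⟩
      rw [Set.mem_iInter₂]
      intro i hiI
      have hiJ : i ∈ J := hIJ hiI
      obtain ⟨j, hjf⟩ : ∃ j, f j = i :=
        ⟨(J.orderIsoOfFin hJcard).symm ⟨i, hiJ⟩, by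
          rw [hf]
          simp⟩
      rw [← hjf]
      exact hxmem (f j) (fun i' => hcond j i')
    obtain ⟨x, hx⟩ := hinter
    rw [Set.mem_iInter₂] at hx
    have hx' : ∀ j, x ∈ F j := fun j => hx j (mem_univ j)
    refine ⟨emb x, (hx' ⟨0, by omega⟩).1, ?_, fun j i => (hx' j).2 i⟩
    intro hz
    have := hembsum x
    rw [hz] at this
    simp at this
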